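/- Let c = c^cr = 1/(4 log 2). There exists N₀ such that for every integer N ≥ N₀, Σ_{r=1}^{N} N_r·(−log(1 − p_r)) ≤ 1. (Consequently the degree of a vertex in the critical graph G_N^c is stochastically dominated by a Poisson random variable with mean 1.) -/

import Mathlib

open scoped BigOperators

/-- Vertices of the discrete 2-dimensional torus. -/
abbrev Vtx (N : ℕ) : Type := ZMod N × ZMod N

/-- `ρ_N(i)`: for a residue represented in `{0,…,N−1}`, `ρ_N(i) = i` if `i ≤ N/2`
and `ρ_N(i) = N − i` otherwise. -/
def rhoN (N : ℕ) (i : ZMod N) : ℕ :=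
  if 2 * i.val ≤ N then i.val else N - i.val

/-- Torus distance `ρ(u,v) = ρ_N(u₁ − v₁) + ρ_N(u₂ − v₂)`. -/
def torusDist (N : ℕ) (u v : Vtx N) : ℕ :=
  rhoN N (u.1 - v.1) + rhoN N (u.2 - v.2)

/-- The critical value `c^cr = 1/(4 log 2)`. -/
noncomputable def ccr : ℝ := 1 / (4 * Real.log 2)

/-- `p_r = min(c/(N·r), 1)`. -/
noncomputable def pr (N : ℕ) (c : ℝ) (r : ℕ) : ℝ :=
  min (c / ((N : ℝ) * (r : ℝ))) 1

/-- `N_r`: the number of vertices at torus distance `r` from a fixed vertex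
(independent of the vertex; here the vertex `0` is used). -/
noncomputable def Nr (N : ℕ) (r : ℕ) : ℕ :=
  {u : Vtx N | torusDist N u 0 = r}.ncard

/-!
Because `p_0 = 0` and `0⁻¹ = 0`, the sum is `∑_u -log (1 - p_{ρ(u)})` over all vertices `u`, and
`-log (1 - x) ≤ x + 2x²` bounds it by `(c/N) S₁ + 2 (c/N)² S₂` with `S_k = ∑_u ρ(u)⁻ᵏ`.
The double sums `∑_{a ≤ p, b ≤ q} 1/(a+b)` telescope into harmonic numbers, which evaluates `S₁`
exactly: `S₁ = 4N (H_{2M} - H_M)` for `N = 2M + 1`, and `S₁ = 4N (H_{2M} - H_M) - 3/(2M)` for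
`N = 2M`. The midpoint rule for `1/x` gives `H_{2M} - H_M ≤ log 2 - 1/(4M+2)`, hence
`S₁ ≤ 4N log 2 - 1`, and at `c = 1/(4 log 2)` the linear term is at most `1 - c/N`. Since
`S₂ ≤ 16 H_N² = O((log N)²)`, the quadratic term is eventually below `c/N`.
-/

open Finset Real Filter Topology

lemma cast_harmonic_succ (n : ℕ) : (harmonic (n + 1) : ℝ) = harmonic n + ((n : ℝ) + 1)⁻¹ := by
  push_cast [harmonic_succ]; ring

lemma cast_harmonic_eq_sum (n : ℕ) : (harmonic n : ℝ) = ∑ i ∈ range n, ((i : ℝ) + 1)⁻¹ := by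
  simp [harmonic]

lemma sum_range_succ_inv_eq_harmonic (n : ℕ) :
    ∑ a ∈ range (n + 1), (a : ℝ)⁻¹ = harmonic n := by
  rw [sum_range_succ', cast_harmonic_eq_sum]; simp

lemma cast_harmonic_add_sub (p q : ℕ) :
    (harmonic (p + q) : ℝ) - harmonic p = ∑ j ∈ range q, ((p + j : ℕ) + 1 : ℝ)⁻¹ := by
  rw [cast_harmonic_eq_sum, cast_harmonic_eq_sum, sum_range_add]; ring

lemma cast_harmonic_mono {m n : ℕ} (h : m ≤ n) : (harmonic m : ℝ) ≤ harmonic n := by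
  obtain ⟨k, rfl⟩ := Nat.exists_eq_add_of_le h
  have := cast_harmonic_add_sub m k
  have : 0 ≤ ∑ j ∈ range k, ((m + j : ℕ) + 1 : ℝ)⁻¹ := sum_nonneg fun _ _ => by positivity
  linarith

lemma sum_range_sum_range_inv_add (p q : ℕ) :
    ∑ a ∈ range (p + 1), ∑ b ∈ range (q + 1), ((a + b : ℕ) : ℝ)⁻¹
      = (p + q + 1) * harmonic (p + q + 1) - p * harmonic p - q * harmonic q - 1 := by
  induction q with
  | zero =>
    simp only [zero_add, sum_range_one, add_zero, Nat.cast_zero, zero_mul, sub_zero,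
      sum_range_succ_inv_eq_harmonic, cast_harmonic_succ]
    field_simp
    ring
  | succ q ih =>
    have hrow : ∑ a ∈ range (p + 1), ((a + (q + 1) : ℕ) : ℝ)⁻¹
        = harmonic (q + (p + 1)) - harmonic q := by
      rw [cast_harmonic_add_sub]; refine sum_congr rfl fun a _ => ?_; push_cast; ring_nf
    simp only [sum_range_succ _ (q + 1), sum_add_distrib, ih, hrow]
    rw [show q + (p + 1) = p + q + 1 by ring, show p + (q + 1) + 1 = (p + q + 1) + 1 by ring,
      cast_harmonic_succ (p + q + 1), cast_harmonic_succ q]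
    push_cast
    field_simp
    ring

-- The midpoint rule for the convex function `1/x` on `[k - 1/2, k + 1/2]`.
lemma inv_le_log_sub_log {k : ℝ} (hk : 1 < 2 * k) : k⁻¹ ≤ log (2 * k + 1) - log (2 * k - 1) := by
  have hx : |(2 * k)⁻¹| < 1 := by
    rw [abs_of_pos (by positivity)]; exact inv_lt_one_of_one_lt₀ hk
  have h := le_hasSum (hasSum_log_sub_log_of_abs_lt_one hx) 0 fun j _ => by positivity
  have hk0 : 0 < k := by linarith
  have h1 : 1 + (2 * k)⁻¹ = (2 * k + 1) / (2 * k) := by field_simp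
  have h2 : 1 - (2 * k)⁻¹ = (2 * k - 1) / (2 * k) := by field_simp
  rw [h1, h2, log_div (by positivity) (by positivity), log_div (by linarith) (by positivity)] at h
  norm_num at h
  linarith

lemma harmonic_two_mul_sub_le (M : ℕ) :
    (harmonic (2 * M) : ℝ) - harmonic M ≤ log 2 - ((4 * M + 2 : ℝ))⁻¹ := by
  have hmid : ∀ j ∈ range M, ((M + j : ℕ) + 1 : ℝ)⁻¹
      ≤ log (2 * M + 2 * (j + 1 : ℕ) + 1) - log (2 * M + 2 * j + 1) := by
    intro j _
    have hk : (0 : ℝ) ≤ (M + j : ℕ) := Nat.cast_nonneg _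
    have := inv_le_log_sub_log (k := (M + j : ℕ) + 1) (by linarith)
    push_cast at this ⊢
    convert this using 3 <;> ring
  have htel := sum_range_sub (fun j : ℕ => log (2 * M + 2 * j + 1)) M
  have hlog2 : log (4 * M + 2 : ℝ) = log 2 + log (2 * M + 1) := by
    rw [← log_mul (by norm_num) (by positivity)]; ring_nf
  have hend : log (4 * M + 1 : ℝ) - log (4 * M + 2) ≤ -((4 * M + 2 : ℝ))⁻¹ := by
    rw [← log_div (by positivity) (by positivity)]
    have := log_le_sub_one_of_pos (show (0 : ℝ) < (4 * M + 1) / (4 * M + 2) by positivity)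
    have e : (4 * M + 1 : ℝ) / (4 * M + 2) - 1 = -((4 * M + 2 : ℝ))⁻¹ := by field_simp; ring
    linarith
  rw [two_mul, cast_harmonic_add_sub]
  have := sum_le_sum hmid
  simp only [htel, Nat.cast_zero, mul_zero, add_zero] at this
  rw [show (2 * M + 2 * M + 1 : ℝ) = 4 * M + 1 by ring] at this
  linarith

lemma rhoN_le_half {N : ℕ} [NeZero N] (x : ZMod N) : rhoN N x ≤ N / 2 := by
  have := x.val_lt
  unfold rhoN; split_ifs <;> omega

-- With `M = ⌊N/2⌋` and `K = ⌊(N-1)/2⌋`, the residues `0, …, M` have `ρ_N = 0, …, M` and the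
-- remaining `K` residues have `ρ_N = K, …, 1`.
lemma sum_zmod_rhoN (g : ℕ → ℝ) {M K : ℕ} (hKM : K ≤ M) (hMK : M ≤ K + 1) :
    ∑ x : ZMod (M + K + 1), g (rhoN _ x)
      = ∑ a ∈ range (M + 1), g a + ∑ a ∈ range (K + 1), g a - g 0 := by
  have hfin : ∑ x : ZMod (M + K + 1), g (rhoN _ x)
      = ∑ i ∈ range (M + K + 1), g (if 2 * i ≤ M + K + 1 then i else M + K + 1 - i) :=
    Fin.sum_univ_eq_sum_range (fun i => g (if 2 * i ≤ M + K + 1 then i else M + K + 1 - i)) _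
  have hlow : ∀ i ∈ range (M + 1), g (if 2 * i ≤ M + K + 1 then i else M + K + 1 - i) = g i :=
    fun i hi => by rw [if_pos (by simp at hi; omega)]
  have hhigh : ∑ j ∈ range K,
      g (if 2 * (M + 1 + j) ≤ M + K + 1 then M + 1 + j else M + K + 1 - (M + 1 + j))
        = ∑ j ∈ range K, g (j + 1) := by
    rw [← sum_range_reflect]
    refine sum_congr rfl fun j hj => ?_
    simp only [mem_range] at hj
    rw [if_neg (by omega)]
    congr 1; omega
  rw [hfin, show range (M + K + 1) = range (M + 1 + K) by rw [add_right_comm], sum_range_add,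
    sum_congr rfl hlow, sum_range_succ' _ K, ← hhigh]
  ring

lemma sum_vtx_torusDist (N : ℕ) [NeZero N] (g : ℕ → ℝ) :
    ∑ u : Vtx N, g (torusDist N u 0) = ∑ x : ZMod N, ∑ y : ZMod N, g (rhoN N x + rhoN N y) := by
  simp [Fintype.sum_prod_type, torusDist]

lemma sum_Icc_Nr_mul (N : ℕ) [NeZero N] (g : ℕ → ℝ) (hg : g 0 = 0) :
    ∑ r ∈ Icc 1 N, (Nr N r : ℝ) * g r = ∑ u : Vtx N, g (torusDist N u 0) := by
  classical
  have hmaps : ∀ u ∈ (univ : Finset (Vtx N)), torusDist N u 0 ∈ range (N + 1) := by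
    intro u _
    have := rhoN_le_half u.1; have := rhoN_le_half u.2
    simp only [torusDist, Prod.fst_zero, Prod.snd_zero, sub_zero, mem_range]; omega
  have hfiber : ∀ r, (Nr N r : ℝ) * g r = ∑ u with torusDist N u 0 = r, g (torusDist N u 0) := by
    intro r
    rw [sum_congr rfl fun u hu => by rw [(mem_filter.mp hu).2], sum_const, nsmul_eq_mul, Nr,
      Set.ncard_eq_toFinset_card', Set.toFinset_ofPred]
  calc ∑ r ∈ Icc 1 N, (Nr N r : ℝ) * g r
      = ∑ r ∈ range (N + 1), (Nr N r : ℝ) * g r := by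
        refine sum_subset (fun r hr => ?_) fun r hr hr' => ?_
        · simp only [mem_Icc, mem_range] at hr ⊢; omega
        · obtain rfl : r = 0 := by simp only [mem_Icc, mem_range] at hr hr'; omega
          simp [hg]
    _ = ∑ u : Vtx N, g (torusDist N u 0) := by
        simp only [hfiber]; exact sum_fiberwise_of_maps_to hmaps _

lemma sum_inv_torusDist {M K : ℕ} (hKM : K ≤ M) (hMK : M ≤ K + 1) :
    ∑ u : Vtx (M + K + 1), ((torusDist _ u 0 : ℕ) : ℝ)⁻¹
      = (2 * M + 1) * harmonic (M + M + 1) + (2 * K + 1) * harmonic (K + K + 1)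
        + 2 * (M + K + 1) * harmonic (M + K + 1)
        - (4 * M + 2) * harmonic M - (4 * K + 2) * harmonic K - 4 := by
  have hrow (a : ℕ) : ∑ y : ZMod (M + K + 1), ((a + rhoN _ y : ℕ) : ℝ)⁻¹
      = ∑ b ∈ range (M + 1), ((a + b : ℕ) : ℝ)⁻¹ + ∑ b ∈ range (K + 1), ((a + b : ℕ) : ℝ)⁻¹
        - (a : ℝ)⁻¹ :=
    sum_zmod_rhoN (fun b => ((a + b : ℕ) : ℝ)⁻¹) hKM hMK
  rw [sum_vtx_torusDist _ fun r => (r : ℝ)⁻¹, sum_congr rfl fun x _ => hrow (rhoN _ x),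
    sum_zmod_rhoN (fun a => ∑ b ∈ range (M + 1), ((a + b : ℕ) : ℝ)⁻¹
      + ∑ b ∈ range (K + 1), ((a + b : ℕ) : ℝ)⁻¹ - (a : ℝ)⁻¹) hKM hMK]
  simp only [sum_add_distrib, sum_sub_distrib, sum_range_sum_range_inv_add,
    sum_range_succ_inv_eq_harmonic, zero_add, Nat.cast_zero, inv_zero, sub_zero]
  rw [add_comm K M]
  ring

lemma sum_inv_torusDist_odd (M : ℕ) :
    ∑ u : Vtx (M + M + 1), ((torusDist _ u 0 : ℕ) : ℝ)⁻¹
      = 4 * (2 * M + 1) * (harmonic (2 * M) - harmonic M) := by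
  rw [sum_inv_torusDist le_rfl (by omega), cast_harmonic_succ (M + M), two_mul M]
  push_cast
  field_simp
  ring

lemma sum_inv_torusDist_even (K : ℕ) :
    ∑ u : Vtx (K + 1 + K + 1), ((torusDist _ u 0 : ℕ) : ℝ)⁻¹
      = 8 * (K + 1) * (harmonic (2 * (K + 1)) - harmonic (K + 1)) - 3 / (2 * (K + 1)) := by
  have hP : (harmonic (K + 1 + (K + 1)) : ℝ) = harmonic (K + K + 1) + ((K : ℝ) + K + 1 + 1)⁻¹ := by
    rw [show K + 1 + (K + 1) = K + K + 1 + 1 by ring, cast_harmonic_succ]; push_cast; ring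
  rw [sum_inv_torusDist (by omega) le_rfl, show K + 1 + K + 1 = K + 1 + (K + 1) by ring,
    two_mul (K + 1),
    cast_harmonic_succ (K + 1 + (K + 1)), hP, cast_harmonic_succ K]
  push_cast
  field_simp
  ring

lemma sum_inv_torusDist_le (N : ℕ) [NeZero N] (hN : 2 ≤ N) :
    ∑ u : Vtx N, ((torusDist N u 0 : ℕ) : ℝ)⁻¹ ≤ 4 * N * log 2 - 1 := by
  obtain ⟨M, K, rfl, hKM, hMK⟩ : ∃ M K, N = M + K + 1 ∧ K ≤ M ∧ M ≤ K + 1 :=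
    ⟨N / 2, (N - 1) / 2, by omega, by omega, by omega⟩
  rcases (by omega : M = K ∨ M = K + 1) with rfl | rfl
  · rw [sum_inv_torusDist_odd]
    calc _ ≤ 4 * (2 * (M : ℝ) + 1) * (log 2 - (4 * M + 2 : ℝ)⁻¹) :=
          mul_le_mul_of_nonneg_left (harmonic_two_mul_sub_le M) (by positivity)
      _ = 4 * (M + M + 1 : ℕ) * log 2 - 2 := by push_cast; field_simp; ring
      _ ≤ _ := by linarith
  · rw [sum_inv_torusDist_even]
    have : (0 : ℝ) ≤ 3 / (2 * (K + 1)) := by positivity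
    calc _ ≤ 8 * ((K : ℝ) + 1) * (log 2 - (4 * (K + 1 : ℕ) + 2 : ℝ)⁻¹) := by
          have := harmonic_two_mul_sub_le (K + 1)
          nlinarith
      _ = 4 * (K + 1 + K + 1 : ℕ) * log 2 - 8 * (K + 1) / (4 * K + 6) := by
          push_cast; field_simp; ring
      _ ≤ _ := by
          gcongr
          rw [le_div_iff₀ (by positivity)]
          linarith

lemma inv_sq_natCast_add_le (a b : ℕ) :
    (((a + b : ℕ) : ℝ)⁻¹) ^ 2 ≤ 4 * ((a : ℝ) + 1)⁻¹ * ((b : ℝ) + 1)⁻¹ := by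
  rcases Nat.eq_zero_or_pos (a + b) with h | h
  · rw [h, Nat.cast_zero, inv_zero, zero_pow two_ne_zero]; positivity
  have hab : (1 : ℝ) ≤ a + b := by exact_mod_cast h
  push_cast
  field_simp
  nlinarith [(a.cast_nonneg : (0 : ℝ) ≤ a), (b.cast_nonneg : (0 : ℝ) ≤ b)]

lemma sum_inv_rhoN_add_one_le (N : ℕ) [NeZero N] :
    ∑ x : ZMod N, ((rhoN N x : ℝ) + 1)⁻¹ ≤ 2 * harmonic N := by
  obtain ⟨M, K, rfl, hKM, hMK⟩ : ∃ M K, N = M + K + 1 ∧ K ≤ M ∧ M ≤ K + 1 :=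
    ⟨N / 2, (N - 1) / 2, by have := NeZero.ne N; omega, by omega, by omega⟩
  rw [sum_zmod_rhoN (fun a => ((a : ℝ) + 1)⁻¹) hKM hMK, ← cast_harmonic_eq_sum,
    ← cast_harmonic_eq_sum]
  have := cast_harmonic_mono (by omega : M + 1 ≤ M + K + 1)
  have := cast_harmonic_mono (by omega : K + 1 ≤ M + K + 1)
  simp only [Nat.cast_zero, zero_add, inv_one]
  linarith

lemma sum_inv_sq_torusDist_le (N : ℕ) [NeZero N] :
    ∑ u : Vtx N, (((torusDist N u 0 : ℕ) : ℝ)⁻¹) ^ 2 ≤ 16 * (harmonic N : ℝ) ^ 2 := by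
  rw [sum_vtx_torusDist N fun r => ((r : ℝ)⁻¹) ^ 2]
  calc _ ≤ ∑ x : ZMod N, ∑ y : ZMod N, 4 * ((rhoN N x : ℝ) + 1)⁻¹ * ((rhoN N y : ℝ) + 1)⁻¹ :=
        sum_le_sum fun x _ => sum_le_sum fun y _ => inv_sq_natCast_add_le _ _
    _ = 4 * (∑ x : ZMod N, ((rhoN N x : ℝ) + 1)⁻¹) ^ 2 := by
        rw [sq, sum_mul_sum, mul_sum]; simp only [mul_sum, mul_assoc]
    _ ≤ 4 * (2 * harmonic N) ^ 2 := by gcongr; exact sum_inv_rhoN_add_one_le N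
    _ = 16 * (harmonic N : ℝ) ^ 2 := by ring

lemma tendsto_harmonic_sq_div :
    Tendsto (fun n : ℕ => (harmonic n : ℝ) ^ 2 / n) atTop (𝓝 0) := by
  have hlo : (fun x : ℝ => (1 + log x) ^ 2) =o[atTop] id := by
    simp only [add_sq, one_pow, mul_one]
    exact ((Asymptotics.isLittleO_const_id_atTop 1).add
      (isLittleO_log_id_atTop.const_mul_left 2)).add isLittleO_pow_log_id_atTop
  have hlim := hlo.tendsto_div_nhds_zero.comp tendsto_natCast_atTop_atTop
  refine tendsto_of_tendsto_of_tendsto_of_le_of_le tendsto_const_nhds hlim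
    (fun n => by positivity) fun n => ?_
  simp only [Function.comp_apply, id]
  gcongr
  · rw [cast_harmonic_eq_sum]; positivity
  · exact harmonic_le_one_add_log n

lemma neg_log_one_sub_le {x : ℝ} (hx : x ≤ 1 / 2) : -log (1 - x) ≤ x + 2 * x ^ 2 := by
  have h1x : 0 < 1 - x := by linarith
  have hlog := log_le_sub_one_of_pos (inv_pos.mpr h1x)
  rw [log_inv] at hlog
  have : (1 - x)⁻¹ - 1 ≤ x + 2 * x ^ 2 := by
    rw [inv_eq_one_div, div_sub_one h1x.ne', div_le_iff₀ h1x]; nlinarith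
  linarith

lemma pr_eq_mul_inv {N : ℕ} {c : ℝ} (hcN : c ≤ N) (r : ℕ) :
    pr N c r = c / N * (r : ℝ)⁻¹ := by
  rw [pr, min_eq_left]
  · rw [div_mul_eq_div_div, div_eq_mul_inv]
  rcases r.eq_zero_or_pos with rfl | hr
  · simp
  · have hr1 : (1 : ℝ) ≤ r := by exact_mod_cast hr
    exact div_le_one_of_le₀ (hcN.trans (le_mul_of_one_le_right N.cast_nonneg hr1)) (by positivity)

lemma sum_Nr_mul_neg_log_le (N : ℕ) [NeZero N] (hN : 2 ≤ N) {c : ℝ} (hc0 : 0 ≤ c)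
    (hc : c ≤ 1 / 2) :
    ∑ r ∈ Icc 1 N, (Nr N r : ℝ) * (-log (1 - pr N c r))
      ≤ c / N * (4 * N * log 2 - 1) + 2 * (c / N) ^ 2 * (16 * (harmonic N : ℝ) ^ 2) := by
  have hN1 : (1 : ℝ) ≤ N := by exact_mod_cast (by omega : 1 ≤ N)
  have hcN : c / N ≤ 1 / 2 := (div_le_self hc0 hN1).trans hc
  rw [sum_Icc_Nr_mul N _ (by simp [pr])]
  calc _ ≤ ∑ u : Vtx N, (c / N * ((torusDist N u 0 : ℕ) : ℝ)⁻¹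
          + 2 * (c / N * ((torusDist N u 0 : ℕ) : ℝ)⁻¹) ^ 2) := by
        refine sum_le_sum fun u _ => ?_
        rw [pr_eq_mul_inv (by linarith)]
        exact neg_log_one_sub_le
          ((mul_le_of_le_one_right (by positivity) (Nat.cast_inv_le_one _)).trans hcN)
    _ = c / N * ∑ u : Vtx N, ((torusDist N u 0 : ℕ) : ℝ)⁻¹
          + 2 * (c / N) ^ 2 * ∑ u : Vtx N, (((torusDist N u 0 : ℕ) : ℝ)⁻¹) ^ 2 := by
        simp only [sum_add_distrib, mul_sum, mul_pow, mul_assoc]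
    _ ≤ _ := by
        gcongr
        · exact sum_inv_torusDist_le N hN
        · exact sum_inv_sq_torusDist_le N

lemma ccr_pos : 0 < ccr := by unfold ccr; have := log_pos one_lt_two; positivity

lemma ccr_le_half : ccr ≤ 1 / 2 := by
  unfold ccr
  rw [div_le_div_iff₀ (by have := log_pos one_lt_two; positivity) two_pos]
  linarith [log_two_gt_d9]

lemma four_mul_ccr_mul_log_two : 4 * ccr * log 2 = 1 := by
  unfold ccr; field_simp [(log_pos one_lt_two).ne']

/-- At the critical value `c = 1/(4 log 2)`, for all large `N`,
`Σ_{r=1}^{N} N_r·(−log(1 − p_r)) ≤ 1`. -/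
theorem stmt7 :
    ∃ N₀ : ℕ, ∀ N : ℕ, N₀ ≤ N →
      ∑ r ∈ Finset.Icc 1 N, (Nr N r : ℝ) * (-Real.log (1 - pr N ccr r)) ≤ 1 := by
  have hc := ccr_pos
  obtain ⟨N₀, hN₀⟩ := eventually_atTop.mp <|
    (tendsto_order.mp tendsto_harmonic_sq_div).2 (1 / (32 * ccr)) (by positivity)
  refine ⟨max N₀ 2, fun N hN => ?_⟩
  have : NeZero N := ⟨by omega⟩
  have hN0 : (0 : ℝ) < N := by exact_mod_cast (by omega : 0 < N)
  have hH : 32 * ccr * (harmonic N : ℝ) ^ 2 / N ≤ 1 := by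
    have := hN₀ N (le_of_max_le_left hN)
    rw [div_lt_div_iff₀ hN0 (by positivity)] at this
    exact div_le_one_of_le₀ (by linarith) hN0.le
  calc _ ≤ ccr / N * (4 * N * log 2 - 1) + 2 * (ccr / N) ^ 2 * (16 * (harmonic N : ℝ) ^ 2) :=
        sum_Nr_mul_neg_log_le N (by omega) hc.le ccr_le_half
    _ = 4 * ccr * log 2 - ccr / N + ccr / N * (32 * ccr * (harmonic N : ℝ) ^ 2 / N) := by
        field_simp; ring
    _ ≤ 1 - ccr / N + ccr / N * 1 := by rw [four_mul_ccr_mul_log_two]; gcongr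
    _ = 1 := by ring
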